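/- Suppose the selective accuracy of the unskewed translated distribution F_{0,μ} (with density h_μ(x) = h(x−μ)) is nondecreasing in τ on [0,∞), i.e. h_μ(−τ)/H_μ(−τ) ≥ h_μ(τ)/(1 − H_μ(τ)) for all τ ≥ 0. Then for every α > 0, the selective accuracy A_{F_{α,μ}}(τ) of the right-skewed distribution f_{α,μ}(x) = 2h(x−μ)G(α(x−μ)) is also nondecreasing in τ on [0,∞). -/

import Mathlib

/-!
Differentiating `A_F(τ) = (1 - F τ) / (1 - F τ + F (-τ))` shows that it is nondecreasing as soon as
`f τ * F (-τ) ≤ f (-τ) * (1 - F τ)`, i.e. the reversed hazard rate at `-τ` dominates the hazard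
rate at `τ`. The skewed density is `2 h_μ` tilted by the nondecreasing weight `G (α (· - μ))`.
On `(-∞, -τ]` the weight is at most its value at `-τ`, on `(τ, ∞)` at least its value at `τ`,
so tilting preserves this comparison, which for `h_μ` is the hypothesis.
-/

open MeasureTheory Set

lemma setIntegral_pos_of_pos {X : Type*} [MeasurableSpace X] {μ : Measure X} {f : X → ℝ}
    {s : Set X} (hf : ∀ x, 0 < f x) (hfi : IntegrableOn f s μ) (hs : 0 < μ s) :
    0 < ∫ x in s, f x ∂μ := by
  rw [setIntegral_pos_iff_support_of_nonneg_ae (ae_of_all _ fun x => (hf x).le) hfi,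
    Function.support_eq_univ fun x => (hf x).ne', univ_inter]
  exact hs

lemma integral_Ioi_eq_integral_sub_integral_Iic {f : ℝ → ℝ} (hfi : Integrable f) (x : ℝ) :
    ∫ t in Ioi x, f t = (∫ t, f t) - ∫ t in Iic x, f t := by
  rw [← compl_Iic, setIntegral_compl measurableSet_Iic hfi]

lemma integral_Iic_comp_sub_right (f : ℝ → ℝ) (c x : ℝ) :
    ∫ t in Iic x, f (t - c) = ∫ t in Iic (x - c), f t := by
  have hpre : (fun t => t - c) ⁻¹' Iic (x - c) = Iic x := by ext t; simp
  rw [← hpre, (measurePreserving_sub_right volume c).setIntegral_preimage_emb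
    (measurableEmbedding_subRight c)]

lemma hasDerivAt_integral_Iic {f : ℝ → ℝ} {x : ℝ} (hfc : ContinuousAt f x) (hfi : Integrable f) :
    HasDerivAt (fun y => ∫ t in Iic y, f t) (f x) x := by
  have hsplit : (fun y => ∫ t in Iic y, f t) = fun y => (∫ t in Iic 0, f t) + ∫ t in 0..y, f t := by
    funext y
    rw [← intervalIntegral.integral_Iic_sub_Iic hfi.integrableOn hfi.integrableOn, add_sub_cancel]
  rw [hsplit]
  exact (intervalIntegral.integral_hasDerivAt_right hfi.intervalIntegrable
    hfi.aestronglyMeasurable.stronglyMeasurableAtFilter hfc).const_add _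

/-- `k b / ∫_{Ioi b} k ≤ k a / ∫_{Iic a} k`, cross-multiplied: the hazard rate of `k` at `b` is
at most its reversed hazard rate at `a`. -/
def ReversedHazardGeHazard (k : ℝ → ℝ) (a b : ℝ) : Prop :=
  k b * ∫ t in Iic a, k t ≤ k a * ∫ t in Ioi b, k t

section Tilting

variable {k w : ℝ → ℝ}

lemma setIntegral_Iic_mul_le_of_monotone (hw : Monotone w) (hk : ∀ t, 0 ≤ k t) {a : ℝ}
    (hki : IntegrableOn k (Iic a)) (hkwi : IntegrableOn (fun t => k t * w t) (Iic a)) :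
    ∫ t in Iic a, k t * w t ≤ (∫ t in Iic a, k t) * w a := by
  rw [← integral_mul_const]
  exact setIntegral_mono_on hkwi (hki.mul_const _) measurableSet_Iic fun t ht =>
    mul_le_mul_of_nonneg_left (hw ht) (hk t)

lemma le_setIntegral_Ioi_mul_of_monotone (hw : Monotone w) (hk : ∀ t, 0 ≤ k t) {b : ℝ}
    (hki : IntegrableOn k (Ioi b)) (hkwi : IntegrableOn (fun t => k t * w t) (Ioi b)) :
    (∫ t in Ioi b, k t) * w b ≤ ∫ t in Ioi b, k t * w t := by
  rw [← integral_mul_const]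
  exact setIntegral_mono_on (hki.mul_const _) hkwi measurableSet_Ioi fun t ht =>
    mul_le_mul_of_nonneg_left (hw ht.le) (hk t)

lemma ReversedHazardGeHazard.mul_monotone {a b : ℝ}
    (hab : ReversedHazardGeHazard k a b) (hk : ∀ t, 0 ≤ k t) (hw : Monotone w)
    (hw₀ : ∀ t, 0 ≤ w t) (hki : Integrable k) (hkwi : Integrable fun t => k t * w t) :
    ReversedHazardGeHazard (fun t => k t * w t) a b := by
  have hIic := setIntegral_Iic_mul_le_of_monotone hw hk (a := a) hki.integrableOn hkwi.integrableOn
  have hIoi := le_setIntegral_Ioi_mul_of_monotone hw hk (b := b) hki.integrableOn hkwi.integrableOn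
  unfold ReversedHazardGeHazard at hab ⊢
  calc k b * w b * ∫ t in Iic a, k t * w t
      ≤ k b * w b * ((∫ t in Iic a, k t) * w a) :=
        mul_le_mul_of_nonneg_left hIic (mul_nonneg (hk b) (hw₀ b))
    _ = w a * w b * (k b * ∫ t in Iic a, k t) := by ring
    _ ≤ w a * w b * (k a * ∫ t in Ioi b, k t) :=
        mul_le_mul_of_nonneg_left hab (mul_nonneg (hw₀ a) (hw₀ b))
    _ = k a * w a * ((∫ t in Ioi b, k t) * w b) := by ring
    _ ≤ k a * w a * ∫ t in Ioi b, k t * w t :=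
        mul_le_mul_of_nonneg_left hIoi (mul_nonneg (hk a) (hw₀ a))

end Tilting

/-- For `X ∼ F`, this is `P(X > τ) / P(|X| > τ)`. -/
noncomputable def selectiveAccuracy (F : ℝ → ℝ) (τ : ℝ) : ℝ :=
  (1 - F τ) / (1 - F τ + F (-τ))

lemma monotoneOn_selectiveAccuracy {F g : ℝ → ℝ} (hF : ∀ x, HasDerivAt F (g x) x)
    (hden : ∀ τ, 0 ≤ τ → 0 < 1 - F τ + F (-τ))
    (hhaz : ∀ τ, 0 < τ → g τ * F (-τ) ≤ g (-τ) * (1 - F τ)) :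
    MonotoneOn (selectiveAccuracy F) (Ici 0) := by
  have hderiv : ∀ x, 0 ≤ x → HasDerivAt (selectiveAccuracy F)
      ((g (-x) * (1 - F x) - g x * F (-x)) / (1 - F x + F (-x)) ^ 2) x := by
    intro x hx
    have hupper : HasDerivAt (fun τ => 1 - F τ) (-g x) x := (hF x).const_sub 1
    have hlower : HasDerivAt (fun τ => F (-τ)) (-g (-x)) x := by
      simpa [Function.comp_def] using (hF (-x)).comp x (hasDerivAt_neg x)
    exact (hupper.div (hupper.add hlower) (hden x hx).ne').congr_deriv
      (by simp only [Pi.add_apply]; ring)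
  refine monotoneOn_of_hasDerivWithinAt_nonneg (convex_Ici 0)
    (fun x hx => (hderiv x hx).continuousAt.continuousWithinAt)
    (fun x hx => (hderiv x (interior_subset hx)).hasDerivWithinAt) fun x hx => ?_
  rw [interior_Ici] at hx
  exact div_nonneg (sub_nonneg.2 (hhaz x hx)) (sq_nonneg _)

lemma monotoneOn_selectiveAccuracy_integral_Iic {g : ℝ → ℝ} (hgc : Continuous g)
    (hgpos : ∀ t, 0 < g t) (hgi : Integrable g) (hg₁ : ∫ t, g t = 1)
    (hhaz : ∀ τ, 0 < τ → ReversedHazardGeHazard g (-τ) τ) :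
    MonotoneOn (selectiveAccuracy fun x => ∫ t in Iic x, g t) (Ici 0) := by
  have htail : ∀ x, ∫ t in Ioi x, g t = 1 - ∫ t in Iic x, g t := fun x => by
    rw [integral_Ioi_eq_integral_sub_integral_Iic hgi, hg₁]
  refine monotoneOn_selectiveAccuracy (fun x => hasDerivAt_integral_Iic hgc.continuousAt hgi)
    (fun τ _ => ?_) fun τ hτ => ?_
  · rw [← htail]
    exact add_pos (setIntegral_pos_of_pos hgpos hgi.integrableOn (by simp))
      (setIntegral_pos_of_pos hgpos hgi.integrableOn (by simp))
  · rw [← htail]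
    exact hhaz τ hτ

theorem skew_preserves_monotonicity_general (h G : ℝ → ℝ)
    (hpos : ∀ t, 0 < h t) (hcont : Continuous h)
    (hGmono : Monotone G) (hGpos : ∀ t, 0 < G t)
    (hGcont : Continuous G)
    (H : ℝ → ℝ) (hH : H = fun x => ∫ t in Set.Iic x, h t)
    (hhint : Integrable h) (hhprob : ∫ t, h t = 1)
    (F : ℝ → ℝ → ℝ → ℝ)
    (hF : F = fun α μ x => ∫ t in Set.Iic x, 2 * h (t - μ) * G (α * (t - μ)))
    (hint : ∀ α μ : ℝ, Integrable (fun t => 2 * h (t - μ) * G (α * (t - μ))))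
    (hprob : ∀ α μ : ℝ, ∫ t, 2 * h (t - μ) * G (α * (t - μ)) = 1)
    (μ α : ℝ) (hα : 0 < α)
    (hbase : ∀ τ : ℝ, 0 ≤ τ →
      h (τ - μ) / (1 - H (τ - μ)) ≤ h (-τ - μ) / H (-τ - μ)) :
    MonotoneOn (fun τ => (1 - F α μ τ) / (1 - F α μ τ + F α μ (-τ))) (Set.Ici 0) := by
  subst hH hF
  set k : ℝ → ℝ := fun t => 2 * h (t - μ)
  have hki : Integrable k := (hhint.comp_sub_right μ).const_mul 2
  have hIic : ∀ x, ∫ t in Iic x, k t = 2 * ∫ t in Iic (x - μ), h t := fun x => by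
    rw [integral_const_mul, integral_Iic_comp_sub_right]
  have hIoi : ∀ x, ∫ t in Ioi x, k t = 2 * ∫ t in Ioi (x - μ), h t := fun x => by
    rw [integral_Ioi_eq_integral_sub_integral_Iic hki, hIic, integral_const_mul,
      integral_sub_right_eq_self, integral_Ioi_eq_integral_sub_integral_Iic hhint]
    ring
  have hkbase : ∀ τ, 0 < τ → ReversedHazardGeHazard k (-τ) τ := by
    intro τ hτ
    have hlower := setIntegral_pos_of_pos hpos hhint.integrableOn (s := Iic (-τ - μ)) (by simp)
    have hupper := setIntegral_pos_of_pos hpos hhint.integrableOn (s := Ioi (τ - μ)) (by simp)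
    have hb := hbase τ hτ.le
    rw [← hhprob, ← integral_Ioi_eq_integral_sub_integral_Iic hhint,
      div_le_div_iff₀ hupper hlower] at hb
    unfold ReversedHazardGeHazard
    rw [hIic, hIoi]
    linarith
  have hw : Monotone fun t => G (α * (t - μ)) :=
    hGmono.comp fun s t hst => mul_le_mul_of_nonneg_left (sub_le_sub_right hst μ) hα.le
  exact monotoneOn_selectiveAccuracy_integral_Iic (by fun_prop)
    (fun t => mul_pos (mul_pos two_pos (hpos _)) (hGpos _)) (hint α μ) (hprob α μ)
    fun τ hτ => (hkbase τ hτ).mul_monotone (fun t => (mul_pos two_pos (hpos _)).le) hw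
      (fun t => (hGpos _).le) hki (hint α μ)

/-- If the selective accuracy of the unskewed translated distribution `H_μ` is nondecreasing
on `[0,∞)` (equivalently `h_μ(-τ)/H_μ(-τ) ≥ h_μ(τ)/(1 - H_μ(τ))` for all `τ ≥ 0`), then
for every `α > 0` the selective accuracy of the right-skewed `F_{α,μ}` is also
nondecreasing on `[0,∞)`. -/
theorem skew_preserves_monotonicity (h G : ℝ → ℝ)
    (hpos : ∀ t, 0 < h t) (hsym : ∀ t, h (-t) = h t) (hcont : Continuous h)
    (hGmono : Monotone G) (hGpos : ∀ t, 0 < G t) (hGsym : ∀ t, G (-t) = 1 - G t)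
    (hGcont : Continuous G)
    (H : ℝ → ℝ) (hH : H = fun x => ∫ t in Set.Iic x, h t)
    (hhint : Integrable h) (hhprob : ∫ t, h t = 1)
    (F : ℝ → ℝ → ℝ → ℝ)
    (hF : F = fun α μ x => ∫ t in Set.Iic x, 2 * h (t - μ) * G (α * (t - μ)))
    (hint : ∀ α μ : ℝ, Integrable (fun t => 2 * h (t - μ) * G (α * (t - μ))))
    (hprob : ∀ α μ : ℝ, ∫ t, 2 * h (t - μ) * G (α * (t - μ)) = 1)
    (μ α : ℝ) (hα : 0 < α)
    (hbase : ∀ τ : ℝ, 0 ≤ τ →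
      h (τ - μ) / (1 - H (τ - μ)) ≤ h (-τ - μ) / H (-τ - μ)) :
    MonotoneOn (fun τ => (1 - F α μ τ) / (1 - F α μ τ + F α μ (-τ))) (Set.Ici 0) :=
  skew_preserves_monotonicity_general h G hpos hcont hGmono hGpos hGcont H hH hhint hhprob F hF hint
    hprob μ α hα hbase
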